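/- arXiv:2204.07407 — 2 statements merged into one kernel-verified Lean document; each statement's English description precedes it below -/
import Mathlib

section
/- For a probability distribution λ_1,...,λ_d (λ_i ≥ 0, Σ λ_i = 1), the total entropy S^t(λ) = -Σ_i [λ_i log₂ λ_i + (1-λ_i) log₂(1-λ_i)] satisfies 0 ≤ S^t(λ) ≤ d log₂ d - (d-1) log₂(d-1). -/
/-!
In nats the summand of the total entropy is the binary entropy `binEntropy λᵢ`, which is
nonnegative on `[0, 1]`. It is also concave there, so by Jensen with uniform weights the sum is at
most `d · binEntropy (1/d)`, and `x · binEntropy x⁻¹ = x log x - (x - 1) log (x - 1)`.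
-/

open Real Finset

theorem ConcaveOn.sum_le_card_mul_map_average {ι : Type*} [Fintype ι] [Nonempty ι] {s : Set ℝ}
    {f : ℝ → ℝ} (hf : ConcaveOn ℝ s f) {p : ι → ℝ} (hp : ∀ i, p i ∈ s) :
    ∑ i, f (p i) ≤ Fintype.card ι * f ((∑ i, p i) / Fintype.card ι) := by
  have hn : (0 : ℝ) < Fintype.card ι := by exact_mod_cast Fintype.card_pos
  have jensen := hf.le_map_sum (t := univ) (w := fun _ ↦ (Fintype.card ι : ℝ)⁻¹)
    (fun _ _ ↦ by positivity) (by simp [hn.ne']) (fun i _ ↦ hp i)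
  simp only [smul_eq_mul, ← mul_sum] at jensen
  rw [div_eq_inv_mul]
  calc ∑ i, f (p i) = Fintype.card ι * ((Fintype.card ι : ℝ)⁻¹ * ∑ i, f (p i)) := by
        field_simp
    _ ≤ _ := by gcongr

namespace Real

theorem mul_binEntropy_inv (x : ℝ) :
    x * binEntropy x⁻¹ = x * log x - (x - 1) * log (x - 1) := by
  rcases eq_or_ne x 0 with rfl | hx0
  · simp
  rcases eq_or_ne x 1 with rfl | hx1
  · simp
  have hinv : (1 - x⁻¹)⁻¹ = x / (x - 1) := by field_simp
  rw [binEntropy, hinv, log_div hx0 (sub_ne_zero.mpr hx1), log_inv, log_inv]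
  field_simp
  ring

theorem binEntropy_div_log (b p : ℝ) :
    binEntropy p / log b = -(p * logb b p + (1 - p) * logb b (1 - p)) := by
  simp only [binEntropy, log_inv, logb]
  ring

end Real

theorem total_entropy_bounds (d : ℕ) (lam : Fin d → ℝ)
    (h0 : ∀ i, 0 ≤ lam i) (hsum : ∑ i, lam i = 1) :
    0 ≤ -∑ i, (lam i * logb 2 (lam i) + (1 - lam i) * logb 2 (1 - lam i)) ∧
    -∑ i, (lam i * logb 2 (lam i) + (1 - lam i) * logb 2 (1 - lam i)) ≤
      (d : ℝ) * logb 2 d - ((d : ℝ) - 1) * logb 2 ((d : ℝ) - 1) := by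
  have hle1 (i : Fin d) : lam i ≤ 1 := hsum ▸ single_le_sum (fun j _ ↦ h0 j) (mem_univ i)
  have : Nonempty (Fin d) :=
    Fin.pos_iff_nonempty.mp (Nat.pos_of_ne_zero (by rintro rfl; simp at hsum))
  have hlog2 : 0 < log 2 := log_pos one_lt_two
  rw [← sum_neg_distrib]
  simp only [← binEntropy_div_log, ← sum_div]
  constructor
  · exact div_nonneg (sum_nonneg fun i _ ↦ binEntropy_nonneg (h0 i) (hle1 i)) hlog2.le
  · have jensen := strictConcave_binEntropy.concaveOn.sum_le_card_mul_map_average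
      (fun i ↦ ⟨h0 i, hle1 i⟩)
    rw [hsum, Fintype.card_fin, one_div, mul_binEntropy_inv] at jensen
    calc (∑ i, binEntropy (lam i)) / log 2
        ≤ (d * log d - (d - 1) * log (d - 1)) / log 2 := by gcongr
      _ = _ := by simp only [logb]; ring
end

section
/- The function h(x) = -((1+√(1-x²))/2) log₂((1+√(1-x²))/2) - ((1-√(1-x²))/2) log₂((1-√(1-x²))/2) is convex on [0,1]. -/
open Real

noncomputable def hFun (x : ℝ) : ℝ :=
  -((1 + Real.sqrt (1 - x ^ 2)) / 2) * logb 2 ((1 + Real.sqrt (1 - x ^ 2)) / 2)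
    - ((1 - Real.sqrt (1 - x ^ 2)) / 2) * logb 2 ((1 - Real.sqrt (1 - x ^ 2)) / 2)

/-!
Write `s = √(1 - x²)` and `L(s) = log (1 + s) - log (1 - s)`. Since `h` is the binary entropy
(in bits) of `(1 + s) / 2`, the chain rule gives `h'(x) = (x / s) · L(s) / (2 log 2)` on `(0, 1)`.
Differentiating again, with `(x / s)' = 1 / s³` and `L'(s) = 2 / (1 - s²) = 2 / x²`, gives
`h''(x) = (L(s) - 2s) / (2 s³ log 2)`, which is positive because
`L(s) = 2 ∑ s^(2k+1) / (2k+1) > 2s`.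
-/

lemma two_mul_lt_log_one_add_sub_log_one_sub {s : ℝ} (hs₀ : 0 < s) (hs₁ : s < 1) :
    2 * s < log (1 + s) - log (1 - s) := by
  have hsum := hasSum_log_sub_log_of_abs_lt_one (abs_lt.2 ⟨by linarith, hs₁⟩)
  have hterm (k : ℕ) : 0 ≤ 2 * (1 / (2 * (k : ℝ) + 1)) * s ^ (2 * k + 1) := by positivity
  calc 2 * s < ∑ k ∈ Finset.range 2, 2 * (1 / (2 * (k : ℝ) + 1)) * s ^ (2 * k + 1) := by
        norm_num [Finset.sum_range_succ]; positivity
    _ ≤ log (1 + s) - log (1 - s) := sum_le_hasSum _ (fun k _ ↦ hterm k) hsum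

lemma hasDerivAt_log_one_add_sub_log_one_sub {s : ℝ} (hs : s ^ 2 < 1) :
    HasDerivAt (fun t ↦ log (1 + t) - log (1 - t)) (2 / (1 - s ^ 2)) s := by
  have hp : 1 + s ≠ 0 := by nlinarith
  have hm : 1 - s ≠ 0 := by nlinarith
  refine ((((hasDerivAt_id s).const_add 1).log hp).sub
    (((hasDerivAt_id s).const_sub 1).log hm)).congr_deriv ?_
  have h : 1 - s ^ 2 ≠ 0 := by nlinarith
  simp only [id_eq]
  field_simp
  ring

lemma hasDerivAt_sqrt_one_sub_sq {x : ℝ} (hx : x ^ 2 < 1) :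
    HasDerivAt (fun y ↦ √(1 - y ^ 2)) (-x / √(1 - x ^ 2)) x := by
  have hpos : 0 < 1 - x ^ 2 := by linarith
  refine (((hasDerivAt_pow 2 x).const_sub 1).sqrt hpos.ne').congr_deriv ?_
  field_simp
  ring

lemma hasDerivAt_div_sqrt_one_sub_sq {x : ℝ} (hx : x ^ 2 < 1) :
    HasDerivAt (fun y ↦ y / √(1 - y ^ 2)) (1 / √(1 - x ^ 2) ^ 3) x := by
  have hpos : 0 < 1 - x ^ 2 := by linarith
  have hs : 0 < √(1 - x ^ 2) := sqrt_pos.2 hpos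
  refine ((hasDerivAt_id x).div (hasDerivAt_sqrt_one_sub_sq hx) hs.ne').congr_deriv ?_
  simp only [id_eq]
  field_simp
  rw [sq_sqrt hpos.le]
  ring

lemma sqrt_one_sub_sq_mem_Ioo {x : ℝ} (hx₀ : x ≠ 0) (hx₁ : x ^ 2 < 1) :
    √(1 - x ^ 2) ∈ Set.Ioo 0 1 := by
  have hx : 0 < x ^ 2 := by positivity
  exact ⟨sqrt_pos.2 (by linarith), (sqrt_lt' one_pos).2 (by nlinarith)⟩

noncomputable def hFunDeriv (x : ℝ) : ℝ :=
  x / √(1 - x ^ 2) * (log (1 + √(1 - x ^ 2)) - log (1 - √(1 - x ^ 2))) / (2 * log 2)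

noncomputable def hFunDeriv2 (x : ℝ) : ℝ :=
  (log (1 + √(1 - x ^ 2)) - log (1 - √(1 - x ^ 2)) - 2 * √(1 - x ^ 2)) /
    (2 * √(1 - x ^ 2) ^ 3 * log 2)

lemma hFun_eq_binEntropy (x : ℝ) : hFun x = binEntropy ((1 + √(1 - x ^ 2)) / 2) / log 2 := by
  rw [hFun, binEntropy, logb, logb, log_inv, log_inv,
    show 1 - (1 + √(1 - x ^ 2)) / 2 = (1 - √(1 - x ^ 2)) / 2 by ring]
  ring

lemma continuous_hFun : Continuous hFun := by
  rw [funext hFun_eq_binEntropy]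
  fun_prop

lemma hasDerivAt_hFun {x : ℝ} (hx₀ : x ≠ 0) (hx₁ : x ^ 2 < 1) :
    HasDerivAt hFun (hFunDeriv x) x := by
  obtain ⟨hs₀, hs₁⟩ := sqrt_one_sub_sq_mem_Ioo hx₀ hx₁
  set s := √(1 - x ^ 2)
  have hp₀ : (1 + s) / 2 ≠ 0 := by positivity
  have hp₁ : (1 + s) / 2 ≠ 1 := by linarith
  rw [funext hFun_eq_binEntropy]
  refine (((hasDerivAt_binEntropy hp₀ hp₁).comp x
    (((hasDerivAt_sqrt_one_sub_sq hx₁).const_add 1).div_const 2)).div_const (log 2)).congr_deriv ?_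
  rw [show 1 - (1 + s) / 2 = (1 - s) / 2 by ring, log_div (by linarith) two_ne_zero,
    log_div (by linarith) two_ne_zero, hFunDeriv]
  have hlog2 := log_pos one_lt_two
  field_simp
  ring

lemma hasDerivAt_hFunDeriv {x : ℝ} (hx₀ : x ≠ 0) (hx₁ : x ^ 2 < 1) :
    HasDerivAt hFunDeriv (hFunDeriv2 x) x := by
  obtain ⟨hs₀, hs₁⟩ := sqrt_one_sub_sq_mem_Ioo hx₀ hx₁
  have hsq : √(1 - x ^ 2) ^ 2 = 1 - x ^ 2 := sq_sqrt (by linarith)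
  have hL := (hasDerivAt_log_one_add_sub_log_one_sub (s := √(1 - x ^ 2)) (by nlinarith)).comp x
    (hasDerivAt_sqrt_one_sub_sq hx₁)
  refine (((hasDerivAt_div_sqrt_one_sub_sq hx₁).mul hL).div_const (2 * log 2)).congr_deriv ?_
  rw [Function.comp_apply, hFunDeriv2, hsq, sub_sub_cancel]
  have hlog2 := log_pos one_lt_two
  field_simp
  ring

lemma hFunDeriv2_pos {x : ℝ} (hx₀ : x ≠ 0) (hx₁ : x ^ 2 < 1) : 0 < hFunDeriv2 x := by
  obtain ⟨hs₀, hs₁⟩ := sqrt_one_sub_sq_mem_Ioo hx₀ hx₁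
  have hL := two_mul_lt_log_one_add_sub_log_one_sub hs₀ hs₁
  have hlog2 := log_pos one_lt_two
  exact div_pos (by linarith) (by positivity)

theorem hFun_convexOn : ConvexOn ℝ (Set.Icc (0:ℝ) 1) hFun := by
  have hint {x : ℝ} (hx : x ∈ interior (Set.Icc (0:ℝ) 1)) : x ≠ 0 ∧ x ^ 2 < 1 := by
    rw [interior_Icc] at hx
    exact ⟨hx.1.ne', by nlinarith [hx.1, hx.2]⟩
  exact convexOn_of_hasDerivWithinAt2_nonneg (convex_Icc 0 1) continuous_hFun.continuousOn
    (fun x hx ↦ (hasDerivAt_hFun (hint hx).1 (hint hx).2).hasDerivWithinAt)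
    (fun x hx ↦ (hasDerivAt_hFunDeriv (hint hx).1 (hint hx).2).hasDerivWithinAt)
    (fun x hx ↦ (hFunDeriv2_pos (hint hx).1 (hint hx).2).le)
end
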